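/- arXiv:1211.1993 — 2 statements merged into one kernel-verified Lean document; each statement's English description precedes it below -/
import Mathlib

section
/- With K and f : K → T as in the tree-of-spaces setup, if each vertex space f⁻¹(v) is δ-hyperbolic (with uniform δ) as a geodesic space, then K is δ'-hyperbolic for some δ' depending only on δ. -/
/-- The real-valued path metric of a graph (unit length edges). -/
noncomputable def gdist {V : Type*} (G : SimpleGraph V) (x y : V) : ℝ := (G.dist x y : ℝ)

/-- Gromov product of `x` and `y` at `w` in the graph metric. -/
noncomputable def gprod {V : Type*} (G : SimpleGraph V) (x y w : V) : ℝ :=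
  (gdist G x w + gdist G y w - gdist G x y) / 2

/-- `δ`-hyperbolicity of a graph via the Gromov four-point condition. -/
def GraphHyperbolic {V : Type*} (G : SimpleGraph V) (δ : ℝ) : Prop :=
  ∀ x y z w : V, min (gprod G x y w) (gprod G y z w) ≤ gprod G x z w + δ

/-- `f : K → T` exhibits `K` as a tree of spaces over the tree `T`. -/
def TreeOfSpaces {VK VT : Type*} (K : SimpleGraph VK) (T : SimpleGraph VT)
    (f : VK → VT) : Prop :=
  T.IsTree ∧
  (∀ a b : VK, K.Adj a b → f a = f b ∨ T.Adj (f a) (f b)) ∧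
  (∀ t : VT, (f ⁻¹' {t}).Nonempty → (K.induce (f ⁻¹' {t})).Connected) ∧
  (∀ s t : VT, T.Adj s t → ∃! p : VK × VK, f p.1 = s ∧ f p.2 = t ∧ K.Adj p.1 p.2)

/-! Every edge of `T` is covered by exactly one edge of `K`, which is therefore a cut edge. Hence each
vertex space `f⁻¹(m)` is isometrically embedded, and every vertex `u` of `K` has a gate in it: a
point through which some geodesic from `u` to each point of `f⁻¹(m)` passes. For four points, take
the median `m` in `T` of three of their images. Two points in different branches of `T` at `m` are
at distance (distance to the gate) + (distance between gates) + (distance to the gate), so for such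
pairs the four-point inequality passes from the gates in `f⁻¹(m)` to the points with the same `δ`.
At most one pair lies in a common branch, and those two points have the same gate, which makes two
of the three pair-sums equal. -/

namespace SimpleGraph

variable {V : Type*} {G : SimpleGraph V}

lemma Walk.dist_add_dist_of_mem_support {u v w : V} (p : G.Walk u v)
    (hp : p.length = G.dist u v) (hw : w ∈ p.support) :
    G.dist u w + G.dist w v = G.dist u v := by
  classical
  have h₁ := dist_le (p.takeUntil w hw)
  have h₂ := dist_le (p.dropUntil w hw)
  have hlen : (p.takeUntil w hw).length + (p.dropUntil w hw).length = p.length := by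
    rw [← Walk.length_append, Walk.take_spec]
  have htri := (p.dropUntil w hw).reachable.dist_triangle_right u
  omega

lemma IsTree.length_eq_dist {T : SimpleGraph V} (hT : T.IsTree) {u v : V} {p : T.Walk u v}
    (hp : p.IsPath) : p.length = T.dist u v := by
  obtain ⟨q, hq, hql⟩ := hT.connected.exists_path_of_dist u v
  rw [show p = q from congrArg Subtype.val
    ((hT.isAcyclic.subsingleton_path u v).elim ⟨p, hp⟩ ⟨q, hq⟩), hql]

lemma Walk.dist_add_one_add_dist_le_length {S : Set V} {a b : V}
    (hcut : ∀ x y, G.Adj x y → x ∈ S → y ∉ S → x = a ∧ y = b) {u v : V} (w : G.Walk u v)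
    (hu : u ∈ S) (hv : v ∉ S) : G.dist u a + 1 + G.dist b v ≤ w.length := by
  induction w with
  | nil => exact absurd hu hv
  | @cons u u' v huu' w ih =>
    rw [Walk.length_cons]
    by_cases hu' : u' ∈ S
    · have := ih hu' hv
      have := huu'.reachable.dist_triangle_left a
      have := dist_eq_one_iff_adj.2 huu'
      omega
    · obtain ⟨rfl, rfl⟩ := hcut u u' huu' hu hu'
      have := dist_le w
      simp only [dist_self]
      omega

lemma Connected.dist_eq_add_of_unique_edge_out (hG : G.Connected) {S : Set V} {a b : V}
    (hab : G.Adj a b) (hcut : ∀ x y, G.Adj x y → x ∈ S → y ∉ S → x = a ∧ y = b) {u v : V}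
    (hu : u ∈ S) (hv : v ∉ S) : G.dist u v = G.dist u a + 1 + G.dist b v := by
  obtain ⟨w, hw⟩ := hG.exists_walk_length_eq_dist u v
  have := w.dist_add_one_add_dist_le_length hcut hu hv
  have := hG.dist_triangle (u := u) (v := a) (w := v)
  have := hG.dist_triangle (u := a) (v := b) (w := v)
  have := dist_eq_one_iff_adj.2 hab
  omega

/-- For a neighbour `s` of `m` in a tree, the vertices of the component of `T - m` containing `s`. -/
def branch (G : SimpleGraph V) (m s : V) : Set V := {c | G.dist s c + 1 = G.dist m c}

def Between (G : SimpleGraph V) (a m c : V) : Prop := G.dist a m + G.dist m c = G.dist a c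

lemma mem_branch {m s c : V} : c ∈ G.branch m s ↔ G.dist s c + 1 = G.dist m c := Iff.rfl

lemma Between.symm {a m c : V} (h : G.Between a m c) : G.Between c m a := by
  have := dist_comm (G := G) (u := a) (v := m)
  have := dist_comm (G := G) (u := m) (v := c)
  have := dist_comm (G := G) (u := a) (v := c)
  unfold Between at *
  omega

lemma notMem_branch_self {m s : V} : m ∉ G.branch m s := by
  simp [branch]

lemma Connected.exists_adj_mem_branch (hG : G.Connected) {m c : V} (hmc : m ≠ c) :
    ∃ s, G.Adj m s ∧ c ∈ G.branch m s := by
  obtain ⟨p, -, hp⟩ := hG.exists_path_of_dist m c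
  cases p with
  | nil => exact absurd rfl hmc
  | @cons _ s _ hms q =>
    refine ⟨s, hms, ?_⟩
    have := dist_le q
    have := hG.dist_triangle (u := m) (v := s) (w := c)
    have := dist_eq_one_iff_adj.2 hms
    rw [Walk.length_cons] at hp
    simp only [mem_branch]
    omega

lemma Connected.not_between_of_mem_branch (hG : G.Connected) {m s a c : V}
    (ha : a ∈ G.branch m s) (hc : c ∈ G.branch m s) : ¬ G.Between a m c := by
  simp only [mem_branch, Between] at *
  have := hG.dist_triangle (u := a) (v := s) (w := c)
  have := dist_comm (G := G) (u := a) (v := s)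
  have := dist_comm (G := G) (u := a) (v := m)
  omega

variable {T : SimpleGraph V}

lemma IsTree.eq_of_mem_branch (hT : T.IsTree) {m s s' c : V} (hs : T.Adj m s) (hs' : T.Adj m s')
    (hc : c ∈ T.branch m s) (hc' : c ∈ T.branch m s') : s = s' := by
  have hpath : ∀ {x}, T.Adj m x → c ∈ T.branch m x → ∃ p : T.Walk m c, p.IsPath ∧ p.snd = x := by
    intro x hx hcx
    obtain ⟨p, hp, hpl⟩ := hT.connected.exists_path_of_dist x c
    have hm : m ∉ p.support := fun hm => by
      have := p.dist_add_dist_of_mem_support hpl hm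
      have := dist_eq_one_iff_adj.2 hx.symm
      simp only [mem_branch] at hcx
      omega
    exact ⟨.cons hx p, hp.cons hm, Walk.snd_cons p hx⟩
  obtain ⟨p, hp, rfl⟩ := hpath hs hc
  obtain ⟨q, hq, rfl⟩ := hpath hs' hc'
  rw [show p = q from congrArg Subtype.val
    ((hT.isAcyclic.subsingleton_path m c).elim ⟨p, hp⟩ ⟨q, hq⟩)]

lemma IsTree.mem_branch_or_mem_branch (hT : T.IsTree) {m s : V} (hms : T.Adj m s) (c : V) :
    c ∈ T.branch m s ∨ c ∈ T.branch s m := by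
  obtain ⟨p, hp, hpl⟩ := hT.connected.exists_path_of_dist s c
  simp only [mem_branch]
  by_cases hm : m ∈ p.support
  · have := p.dist_add_dist_of_mem_support hpl hm
    have := dist_eq_one_iff_adj.2 hms.symm
    omega
  · have := hT.length_eq_dist (hp.cons hm (h := hms))
    rw [Walk.length_cons] at this
    omega

lemma IsTree.eq_of_adj_of_mem_branch (hT : T.IsTree) {m s c c' : V} (hms : T.Adj m s)
    (hcc' : T.Adj c c') (hc : c ∈ T.branch m s) (hc' : c' ∉ T.branch m s) : c = s ∧ c' = m := by
  have hc'' := (hT.mem_branch_or_mem_branch hms c').resolve_left hc'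
  simp only [mem_branch] at hc hc' hc''
  have := hcc'.diff_dist_adj (u := s)
  have := hcc'.diff_dist_adj (u := m)
  by_cases hcs : c = s
  · subst hcs
    have := dist_self (G := T) (v := c)
    exact ⟨rfl, (hT.connected.dist_eq_zero_iff.1 (by omega)).symm⟩
  -- the first step from `c` towards `s` would also be a first step towards `m`
  obtain ⟨x, hcx, hx⟩ := hT.connected.exists_adj_mem_branch hcs
  simp only [mem_branch] at hx
  have := hms.diff_dist_adj (u := x)
  have := hcx.diff_dist_adj (u := m)
  have := dist_comm (G := T) (u := c') (v := m)
  have := dist_comm (G := T) (u := c') (v := s)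
  have := dist_comm (G := T) (u := x) (v := s)
  have := dist_comm (G := T) (u := x) (v := m)
  have := dist_comm (G := T) (u := c) (v := m)
  have := dist_comm (G := T) (u := c) (v := s)
  have hxc' : x = c' := hT.eq_of_mem_branch hcx hcc' (c := m)
    (by simp only [mem_branch]; omega) (by simp only [mem_branch]; omega)
  subst hxc'
  omega

lemma IsTree.between_of_mem_branch_of_notMem (hT : T.IsTree) {m s a c : V} (hms : T.Adj m s)
    (ha : a ∈ T.branch m s) (hc : c ∉ T.branch m s) : T.Between a m c := by
  have := hT.connected.dist_eq_add_of_unique_edge_out hms.symm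
    (fun x y hxy hx hy => hT.eq_of_adj_of_mem_branch hms hxy hx hy) ha hc
  simp only [mem_branch] at ha
  have := dist_comm (G := T) (u := a) (v := s)
  have := dist_comm (G := T) (u := a) (v := m)
  simp only [Between]
  omega

lemma IsTree.exists_branch_of_not_between (hT : T.IsTree) {a m c : V} (h : ¬ T.Between a m c) :
    ∃ s, T.Adj m s ∧ a ∈ T.branch m s ∧ c ∈ T.branch m s := by
  have ham : m ≠ a := by rintro rfl; simp [Between] at h
  obtain ⟨s, hms, ha⟩ := hT.connected.exists_adj_mem_branch ham
  by_contra! hc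
  exact h (hT.between_of_mem_branch_of_notMem hms ha (hc s hms ha))

lemma IsTree.between_or_between (hT : T.IsTree) {a m b : V} (h : T.Between a m b) (d : V) :
    T.Between a m d ∨ T.Between b m d := by
  by_contra! hn
  obtain ⟨s, hs, ha, hd⟩ := hT.exists_branch_of_not_between hn.1
  obtain ⟨s', hs', hb, hd'⟩ := hT.exists_branch_of_not_between hn.2
  obtain rfl := hT.eq_of_mem_branch hs hs' hd hd'
  exact hT.connected.not_between_of_mem_branch ha hb h

lemma IsTree.exists_median (hT : T.IsTree) (a b c : V) :
    ∃ m, T.Between a m b ∧ T.Between a m c ∧ T.Between b m c := by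
  obtain ⟨n, hn⟩ : ∃ n, T.dist a b + T.dist a c = n := ⟨_, rfl⟩
  induction n using Nat.strong_induction_on generalizing a with
  | _ n ih =>
  by_cases hbac : T.Between b a c
  · exact ⟨a, by simp [Between], by simp [Between], hbac⟩
  obtain ⟨s, has, hb, hc⟩ := hT.exists_branch_of_not_between hbac
  simp only [mem_branch] at hb hc
  obtain ⟨m, hsb, hsc, hbc⟩ := ih _ (by omega) s rfl
  have := dist_eq_one_iff_adj.2 has
  have := hT.connected.dist_triangle (u := a) (v := s) (w := m)
  refine ⟨m, ?_, ?_, hbc⟩ <;> unfold Between at hsb hsc ⊢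
  · have := hT.connected.dist_triangle (u := a) (v := m) (w := b)
    omega
  · have := hT.connected.dist_triangle (u := a) (v := m) (w := c)
    omega

def IsGate (G : SimpleGraph V) (F : Set V) (u g : V) : Prop :=
  g ∈ F ∧ ∀ p ∈ F, G.dist u p = G.dist u g + G.dist g p

lemma isGate_self {F : Set V} {u : V} (hu : u ∈ F) : G.IsGate F u u :=
  ⟨hu, fun p _ => by simp⟩

lemma IsGate.eq (hG : G.Connected) {F : Set V} {u g g' : V} (h : G.IsGate F u g)
    (h' : G.IsGate F u g') : g = g' := by
  have := h.2 g' h'.1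
  have := h'.2 g h.1
  exact hG.dist_eq_zero_iff.1 (by omega)

end SimpleGraph

section FourPoint

variable {V : Type*} {G : SimpleGraph V}

def FourPoint (G : SimpleGraph V) (δ : ℝ) (a b c d : V) : Prop :=
  gdist G a c + gdist G b d ≤ max (gdist G a b + gdist G c d) (gdist G b c + gdist G a d) + 2 * δ

lemma graphHyperbolic_iff {δ : ℝ} : GraphHyperbolic G δ ↔ ∀ a b c d, FourPoint G δ a b c d := by
  refine forall₄_congr fun a b c d => ?_
  simp only [FourPoint, gprod, min_le_iff]
  rw [← max_add_add_right, le_max_iff]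
  constructor <;> rintro (h | h) <;> first | (left; linarith) | (right; linarith)

lemma GraphHyperbolic.nonneg {δ : ℝ} (h : GraphHyperbolic G δ) (v : V) : 0 ≤ δ := by
  simpa [gprod] using h v v v v

lemma fourPoint_comm {δ : ℝ} {a b c d : V} : FourPoint G δ a b c d ↔ FourPoint G δ c b a d := by
  rw [FourPoint, FourPoint, max_comm]
  simp only [gdist, SimpleGraph.dist_comm (u := c) (v := a), SimpleGraph.dist_comm (u := c) (v := b),
    SimpleGraph.dist_comm (u := b) (v := a)]

def ThroughGates (G : SimpleGraph V) (g : V → V) (u v : V) : Prop :=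
  G.dist u v = G.dist u (g u) + G.dist (g u) (g v) + G.dist v (g v)

lemma fourPoint_of_throughGates (hG : G.Connected) {g : V → V} {δ : ℝ} {a b c d : V}
    (hg : FourPoint G δ (g a) (g b) (g c) (g d)) (hab : ThroughGates G g a b)
    (hcd : ThroughGates G g c d) (hbc : ThroughGates G g b c) (had : ThroughGates G g a d) :
    FourPoint G δ a b c d := by
  have hac : (G.dist a c : ℝ) ≤ G.dist a (g a) + G.dist (g a) (g c) + G.dist c (g c) := by
    exact_mod_cast hG.dist_triangle.trans
      (add_le_add hG.dist_triangle SimpleGraph.dist_comm.le)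
  have hbd : (G.dist b d : ℝ) ≤ G.dist b (g b) + G.dist (g b) (g d) + G.dist d (g d) := by
    exact_mod_cast hG.dist_triangle.trans
      (add_le_add hG.dist_triangle SimpleGraph.dist_comm.le)
  simp only [FourPoint, gdist, ThroughGates] at *
  rw [hab, hcd, hbc, had]
  push_cast
  rcases le_total ((G.dist (g a) (g b) : ℝ) + G.dist (g c) (g d))
    (G.dist (g b) (g c) + G.dist (g a) (g d)) with h | h
  · rw [max_eq_right h] at hg
    rw [max_eq_right (by linarith)]
    linarith
  · rw [max_eq_left h] at hg
    rw [max_eq_left (by linarith)]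
    linarith

lemma fourPoint_of_throughGates_of_gate_eq {g : V → V} {δ : ℝ} (hδ : 0 ≤ δ) {a b c d : V}
    (hgd : g a = g d) (hab : ThroughGates G g a b) (hcd : ThroughGates G g c d)
    (hac : ThroughGates G g a c) (hbd : ThroughGates G g b d) : FourPoint G δ a b c d := by
  have : G.dist a c + G.dist b d = G.dist a b + G.dist c d := by
    simp only [ThroughGates] at *
    rw [hab, hcd, hac, hbd, ← hgd, SimpleGraph.dist_comm (u := g c),
      SimpleGraph.dist_comm (u := g b)]
    ring
  have hR : (G.dist a c : ℝ) + G.dist b d = G.dist a b + G.dist c d := by exact_mod_cast this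
  simp only [FourPoint, gdist]
  linarith [le_max_left ((G.dist a b : ℝ) + G.dist c d) (G.dist b c + G.dist a d)]

end FourPoint

namespace TreeOfSpaces

open SimpleGraph

variable {VK VT : Type*} {K : SimpleGraph VK} {T : SimpleGraph VT} {f : VK → VT}

/-- The witness is the endpoint over `m` of the unique edge of `K` above `(s, m)`. -/
lemma exists_gate_of_adj (h : TreeOfSpaces K T f) (hK : K.Connected) {m s : VT}
    (hms : T.Adj m s) :
    ∃ b, (∀ u, f u ∈ T.branch m s → K.IsGate (f ⁻¹' {m}) u b) ∧
      ∀ u v, f u ∈ T.branch m s → f v ∉ T.branch m s → K.dist u v = K.dist u b + K.dist b v := by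
  obtain ⟨hT, hAdj, -, hEdge⟩ := h
  obtain ⟨⟨a, b⟩, ⟨ha, hb, hab⟩, hunique⟩ := hEdge s m hms.symm
  dsimp only at ha hb hab
  have hcut : ∀ u v, f u ∈ T.branch m s → f v ∉ T.branch m s →
      K.dist u v = K.dist u a + 1 + K.dist b v := by
    refine fun u v hu hv => hK.dist_eq_add_of_unique_edge_out (S := f ⁻¹' T.branch m s) hab
      (fun x y hxy hx hy => ?_) hu hv
    have hT' := (hAdj x y hxy).resolve_left fun e => hy (show f y ∈ T.branch m s from e ▸ hx)
    obtain ⟨hxs, hym⟩ := hT.eq_of_adj_of_mem_branch hms hT' hx hy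
    simpa using hunique (x, y) ⟨hxs, hym, hxy⟩
  have hb' : f b ∉ T.branch m s := hb ▸ notMem_branch_self
  have hdist : ∀ u v, f u ∈ T.branch m s → f v ∉ T.branch m s →
      K.dist u v = K.dist u b + K.dist b v := by
    intro u v hu hv
    have := hcut u v hu hv
    have := hcut u b hu hb'
    rw [SimpleGraph.dist_self] at this
    omega
  exact ⟨b, fun u hu => ⟨hb, fun p hp => hdist u p hu (hp ▸ notMem_branch_self)⟩, hdist⟩

lemma exists_isGate (h : TreeOfSpaces K T f) (hK : K.Connected) (m : VT) (u : VK) :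
    ∃ g, K.IsGate (f ⁻¹' {m}) u g := by
  by_cases hu : f u = m
  · exact ⟨u, isGate_self hu⟩
  obtain ⟨s, hms, hus⟩ := h.1.connected.exists_adj_mem_branch (Ne.symm hu)
  obtain ⟨b, hgate, -⟩ := h.exists_gate_of_adj hK hms
  exact ⟨b, hgate u hus⟩

lemma gate_eq_of_not_between (h : TreeOfSpaces K T f) (hK : K.Connected) {m : VT}
    {g : VK → VK} (hg : ∀ u, K.IsGate (f ⁻¹' {m}) u (g u)) {u v : VK}
    (huv : ¬ T.Between (f u) m (f v)) : g u = g v := by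
  obtain ⟨s, hms, hus, hvs⟩ := h.1.exists_branch_of_not_between huv
  obtain ⟨b, hgate, -⟩ := h.exists_gate_of_adj hK hms
  rw [(hg u).eq hK (hgate u hus), (hg v).eq hK (hgate v hvs)]

lemma throughGates_of_between (h : TreeOfSpaces K T f) (hK : K.Connected) {m : VT}
    {g : VK → VK} (hg : ∀ u, K.IsGate (f ⁻¹' {m}) u (g u)) {u v : VK}
    (huv : T.Between (f u) m (f v)) : ThroughGates K g u v := by
  have hself : ∀ {w}, f w = m → g w = w := fun hw => (hg _).eq hK (isGate_self hw)
  unfold ThroughGates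
  by_cases hu : f u = m
  · have := (hg v).2 u hu
    have := dist_comm (G := K) (u := u) (v := v)
    have := dist_comm (G := K) (u := u) (v := g v)
    rw [hself hu, SimpleGraph.dist_self]
    omega
  by_cases hv : f v = m
  · have := (hg u).2 v hv
    rw [hself hv, SimpleGraph.dist_self]
    omega
  obtain ⟨s, hms, hus⟩ := h.1.connected.exists_adj_mem_branch (Ne.symm hu)
  have hvs : f v ∉ T.branch m s := fun hvs => h.1.connected.not_between_of_mem_branch hus hvs huv
  obtain ⟨b, hgate, hdist⟩ := h.exists_gate_of_adj hK hms
  rw [(hg u).eq hK (hgate u hus)]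
  have := hdist u v hus hvs
  have := (hg v).2 b (hgate u hus).1
  have := dist_comm (G := K) (u := b) (v := v)
  have := dist_comm (G := K) (u := g v) (v := b)
  omega

lemma mem_fiber_of_mem_support (h : TreeOfSpaces K T f) (hK : K.Connected) {t : VT} {u v x : VK}
    (p : K.Walk u v) (hp : p.length = K.dist u v) (hu : f u = t) (hv : f v = t)
    (hx : x ∈ p.support) : f x = t := by
  by_contra hxt
  obtain ⟨g, hg, hgate⟩ := h.exists_isGate hK t x
  have := hgate u hu
  have := hgate v hv
  have := p.dist_add_dist_of_mem_support hp hx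
  have := hK.dist_triangle (u := u) (v := g) (w := v)
  have := hK.pos_dist_of_ne (u := x) (v := g) fun hxg => hxt (hxg ▸ hg)
  have := dist_comm (G := K) (u := u) (v := x)
  have := dist_comm (G := K) (u := u) (v := g)
  omega

lemma dist_induce_fiber (h : TreeOfSpaces K T f) (hK : K.Connected) {t : VT}
    (u v : f ⁻¹' {t}) : (K.induce (f ⁻¹' {t})).dist u v = K.dist u v := by
  apply le_antisymm
  · obtain ⟨p, hp⟩ := hK.exists_walk_length_eq_dist u v
    have hsupp : ∀ x ∈ p.support, x ∈ f ⁻¹' {t} :=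
      fun x hx => h.mem_fiber_of_mem_support hK p hp u.2 v.2 hx
    have := dist_le (p.induce (f ⁻¹' {t}) hsupp)
    rw [← Walk.length_map (Embedding.induce _).toHom, Walk.map_induce] at this
    exact this.trans hp.le
  · obtain ⟨q, hq⟩ := (h.2.2.1 t ⟨u, u.2⟩).exists_walk_length_eq_dist u v
    rw [← hq, ← Walk.length_map (Embedding.induce _).toHom]
    exact dist_le _

lemma fourPoint_of_mem_fiber (h : TreeOfSpaces K T f) (hK : K.Connected) {t : VT} {δ : ℝ}
    (hfib : GraphHyperbolic (K.induce (f ⁻¹' {t})) δ) {a b c d : VK} (ha : f a = t)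
    (hb : f b = t) (hc : f c = t) (hd : f d = t) : FourPoint K δ a b c d := by
  have := graphHyperbolic_iff.1 hfib ⟨a, ha⟩ ⟨b, hb⟩ ⟨c, hc⟩ ⟨d, hd⟩
  simpa only [FourPoint, gdist, h.dist_induce_fiber hK] using this

end TreeOfSpaces

theorem TreeOfSpaces.graphHyperbolic {VK VT : Type*} {K : SimpleGraph VK} {T : SimpleGraph VT}
    {f : VK → VT} {δ : ℝ} (h : TreeOfSpaces K T f) (hK : K.Connected)
    (hfib : ∀ t, GraphHyperbolic (K.induce (f ⁻¹' {t})) δ) : GraphHyperbolic K δ := by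
  refine graphHyperbolic_iff.2 fun a b c d => ?_
  obtain ⟨m, hab, hac, hbc⟩ := h.1.exists_median (f a) (f b) (f c)
  choose g hg using h.exists_isGate hK m
  have hδ : 0 ≤ δ := (hfib m).nonneg ⟨g a, (hg a).1⟩
  have hgates := h.fourPoint_of_mem_fiber hK (hfib m) (hg a).1 (hg b).1 (hg c).1 (hg d).1
  have through {u v} (huv : T.Between (f u) m (f v)) := h.throughGates_of_between hK hg huv
  have gate_eq {u v} (huv : ¬ T.Between (f u) m (f v)) := h.gate_eq_of_not_between hK hg huv
  by_cases hbd : T.Between (f b) m (f d)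
  · by_cases had : T.Between (f a) m (f d)
    · by_cases hcd : T.Between (f c) m (f d)
      · exact fourPoint_of_throughGates hK hgates (through hab) (through hcd) (through hbc)
          (through had)
      · exact fourPoint_comm.2 (fourPoint_of_throughGates_of_gate_eq hδ (gate_eq hcd)
          (through hbc.symm) (through had) (through hac.symm) (through hbd))
    · exact fourPoint_of_throughGates_of_gate_eq hδ (gate_eq had) (through hab)
        (through ((h.1.between_or_between hac (f d)).resolve_left had)) (through hac) (through hbd)
  · exact fourPoint_of_throughGates hK hgates (through hab)
      (through ((h.1.between_or_between hbc (f d)).resolve_left hbd)) (through hbc)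
      (through ((h.1.between_or_between hab (f d)).resolve_right hbd))

theorem hyperbolic_tree_of_spaces_general (δ : ℝ) :
    ∃ δ' : ℝ, ∀ (VK VT : Type) (K : SimpleGraph VK) (T : SimpleGraph VT) (f : VK → VT),
      TreeOfSpaces K T f → K.Connected →
      (∀ t : VT, GraphHyperbolic (K.induce (f ⁻¹' {t})) δ) →
      GraphHyperbolic K δ' :=
  ⟨δ, fun _ _ _ _ _ h hK hfib => h.graphHyperbolic hK hfib⟩

/-- If each vertex space of a connected tree of spaces is `δ`-hyperbolic, then `K` is
`δ'`-hyperbolic, where `δ'` depends only on `δ`. -/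
theorem hyperbolic_tree_of_spaces (δ : ℝ) (hδ : 0 ≤ δ) :
    ∃ δ' : ℝ, ∀ (VK VT : Type) (K : SimpleGraph VK) (T : SimpleGraph VT) (f : VK → VT),
      TreeOfSpaces K T f → K.Connected →
      (∀ t : VT, GraphHyperbolic (K.induce (f ⁻¹' {t})) δ) →
      GraphHyperbolic K δ' :=
  hyperbolic_tree_of_spaces_general δ
end

section
/- Let K be a tree of spaces over a tree T (via f : K → T as above), and let L ⊆ K be a connected subgraph such that for each vertex v of T the intersection L ∩ f⁻¹(v) is κ-quasiconvex in the vertex space f⁻¹(v), and L contains every edge of K mapping to an edge of f(L). Then L is κ'-quasiconvex in K for some κ' depending only on κ. -/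
/-- A set `S` of vertices is `κ`-quasiconvex in the graph `G`: every geodesic of `G`
with endpoints in `S` lies in the `κ`-neighborhood of `S`. -/
def QuasiconvexIn {V : Type*} (G : SimpleGraph V) (S : Set V) (κ : ℕ) : Prop :=
  ∀ a b : V, a ∈ S → b ∈ S → ∀ w : G.Walk a b, w.length = G.dist a b →
    ∀ x ∈ w.support, ∃ s ∈ S, G.dist x s ≤ κ

/-!
Let `w` be a geodesic of `K` between two vertices of `S` and `x` a vertex of `w`. Distinct
edges of `K` crossing between fibres project to distinct edges of `T`, so the projection of `w`
to `T` is a trail, hence the unique path of the tree `T` between its endpoints; the projection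
of a walk inside `S` with the same endpoints passes through that path, so every fibre visited
by `w` meets `S`. The maximal segment of `w` through `x` inside the fibre of `x` therefore starts
and ends in `S` (at an endpoint of `w`, or at a crossing edge, which `S` contains). As a geodesic
of `K` lying in the fibre it is a geodesic of the fibre, and quasiconvexity there puts `x` within
`κ` of `S`: one can take `κ' = κ`.
-/

namespace SimpleGraph

variable {V W : Type*} {G : SimpleGraph V}

lemma IsAcyclic.support_subset_of_isPath (hG : G.IsAcyclic) {u v : V} {p : G.Walk u v}
    (hp : p.IsPath) (q : G.Walk u v) : p.support ⊆ q.support := by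
  classical
  have hpq : p = q.bypass :=
    congrArg Subtype.val <| (hG.subsingleton_path u v).elim ⟨p, hp⟩ ⟨_, q.bypass_isPath⟩
  exact hpq ▸ q.support_bypass_subset_support

lemma Reachable.dist_le_dist_induce {s : Set V} {x y : s} (h : (G.induce s).Reachable x y) :
    G.dist x y ≤ (G.induce s).dist x y := by
  obtain ⟨w, hw⟩ := h.exists_walk_length_eq_dist
  rw [← hw, ← w.length_map (Embedding.induce s).toHom]
  exact dist_le _

namespace Walk

variable {H : SimpleGraph W} {f : V → W}
  (hf : ∀ a b, G.Adj a b → f a = f b ∨ H.Adj (f a) (f b))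

open scoped Classical in
noncomputable def project : {a b : V} → G.Walk a b → H.Walk (f a) (f b)
  | _, _, nil => nil
  | a, _, cons (v := c) h w =>
    if he : f a = f c then (project w).copy he.symm rfl
    else cons ((hf a c h).resolve_left he) (project w)

variable {hf}

lemma mem_support_project_iff {a b : V} (w : G.Walk a b) {r : W} :
    r ∈ (w.project hf).support ↔ ∃ z ∈ w.support, f z = r := by
  induction w with
  | nil => simp [project, eq_comm]
  | @cons a c b h w ih =>
    by_cases he : f a = f c
    · simp only [project, he, dite_true, support_copy, ih, support_cons, List.mem_cons,
        exists_eq_or_imp]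
      exact ⟨Or.inr, fun h => h.elim (fun hcr => ⟨c, w.start_mem_support, hcr⟩) id⟩
    · simp [project, he, ih, eq_comm]

lemma exists_mem_edges_of_mem_edges_project {a b : V} (w : G.Walk a b) {e : Sym2 W}
    (he : e ∈ (w.project hf).edges) : ∃ e' ∈ w.edges, e'.map f = e := by
  induction w with
  | nil => simp [project] at he
  | @cons a c b h w ih =>
    by_cases hac : f a = f c
    · simp only [project, hac, dite_true, edges_copy] at he
      obtain ⟨e', he', rfl⟩ := ih he
      exact ⟨e', by simp [he'], rfl⟩
    · simp only [project, hac, dite_false, edges_cons, List.mem_cons] at he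
      rcases he with rfl | he
      · exact ⟨s(a, c), by simp, rfl⟩
      · obtain ⟨e', he', rfl⟩ := ih he
        exact ⟨e', by simp [he'], rfl⟩

lemma IsTrail.project
    (hinj : Set.InjOn (Sym2.map f) {e | e ∈ G.edgeSet ∧ ¬(e.map f).IsDiag})
    {a b : V} {w : G.Walk a b} (hw : w.IsTrail) : (w.project hf).IsTrail := by
  induction w with
  | nil => simp [Walk.project]
  | @cons a c b h w ih =>
    rw [isTrail_cons] at hw
    by_cases hac : f a = f c
    · simpa [Walk.project, hac] using ih hw.1
    · simp only [Walk.project, hac, dite_false, isTrail_cons]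
      refine ⟨ih hw.1, fun hmem => hw.2 ?_⟩
      obtain ⟨e', he', hmap⟩ := exists_mem_edges_of_mem_edges_project w hmem
      have : e' = s(a, c) :=
        hinj ⟨w.edges_subset_edgeSet he', by simp [hmap, hac]⟩ ⟨h, by simp [hac]⟩ hmap
      exact this ▸ he'

variable {S : Set V}

lemma exists_prefix_in_fiber_ending_mem
    (hS : ∀ a b, G.Adj a b → f a ≠ f b →
      (∃ a' ∈ S, f a' = f a) → (∃ b' ∈ S, f b' = f b) → a ∈ S ∧ b ∈ S)
    {x c : V} (w : G.Walk x c) (hc : c ∈ S)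
    (hmeets : ∀ z ∈ w.support, ∃ y ∈ S, f y = f z) :
    ∃ q ∈ S, ∃ (u : G.Walk x q) (r : G.Walk q c),
      w = u.append r ∧ ∀ y ∈ u.support, f y = f x := by
  induction w with
  | nil => exact ⟨_, hc, nil, nil, rfl, by simp⟩
  | @cons x d c h w ih =>
    by_cases hxd : f x = f d
    · obtain ⟨q, hq, u, r, rfl, hu⟩ := ih hc fun z hz => hmeets z (by simp [hz])
      refine ⟨q, hq, cons h u, r, rfl, ?_⟩
      simp only [support_cons, List.mem_cons, forall_eq_or_imp, true_and]
      exact fun y hy => (hu y hy).trans hxd.symm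
    · have hx : x ∈ S := (hS x d h hxd (hmeets x (by simp)) (hmeets d (by simp))).1
      exact ⟨x, hx, nil, cons h w, rfl, by simp⟩

lemma exists_fiber_segment_mem
    (hS : ∀ a b, G.Adj a b → f a ≠ f b →
      (∃ a' ∈ S, f a' = f a) → (∃ b' ∈ S, f b' = f b) → a ∈ S ∧ b ∈ S)
    {a b : V} {w : G.Walk a b} (ha : a ∈ S) (hb : b ∈ S)
    (hmeets : ∀ z ∈ w.support, ∃ y ∈ S, f y = f z) {x : V} (hx : x ∈ w.support) :
    ∃ p ∈ S, ∃ q ∈ S, ∃ m : G.Walk p q,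
      m.IsSubwalk w ∧ x ∈ m.support ∧ ∀ y ∈ m.support, f y = f x := by
  classical
  obtain ⟨q, hq, u, r, hsuffix, hu⟩ :=
    exists_prefix_in_fiber_ending_mem hS (w.dropUntil x hx) hb
      fun z hz => hmeets z (w.support_dropUntil_subset_support hx hz)
  obtain ⟨p, hp, u', r', hprefix, hu'⟩ :=
    exists_prefix_in_fiber_ending_mem hS (w.takeUntil x hx).reverse ha
      fun z hz => hmeets z (w.support_takeUntil_subset_support hx (by simpa using hz))
  refine ⟨p, hp, q, hq, u'.reverse.append u, ⟨r'.reverse, r, ?_⟩, by simp, ?_⟩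
  · have := w.take_spec hx
    rw [← reverse_reverse (w.takeUntil x hx), hprefix, hsuffix] at this
    rw [← this]
    simp [append_assoc]
  · simp only [mem_support_append_iff, support_reverse, List.mem_reverse]
    rintro y (hy | hy)
    exacts [hu' y hy, hu y hy]

end Walk

end SimpleGraph

open SimpleGraph

lemma QuasiconvexIn.exists_dist_le_of_support_subset {V : Type*} {G : SimpleGraph V}
    {A S : Set V} {κ : ℕ} (hA : (G.induce A).Preconnected)
    (hQ : QuasiconvexIn (G.induce A) {x : A | (x : V) ∈ S} κ)
    {p q : V} (hp : p ∈ S) (hq : q ∈ S) (m : G.Walk p q) (hm : m.length = G.dist p q)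
    (hmA : ∀ y ∈ m.support, y ∈ A) {x : V} (hx : x ∈ m.support) :
    ∃ s ∈ S, G.dist x s ≤ κ := by
  set p' : A := ⟨p, hmA p m.start_mem_support⟩
  set q' : A := ⟨q, hmA q m.end_mem_support⟩
  have hgeo : (m.induce A hmA).length = (G.induce A).dist p' q' := by
    refine le_antisymm ?_ (dist_le _)
    have hlen := congrArg Walk.length (m.map_induce hmA)
    rw [Walk.length_map] at hlen
    exact hlen.trans_le (hm ▸ (hA p' q').dist_le_dist_induce)
  obtain ⟨s, hs, hxs⟩ := hQ p' q' hp hq _ hgeo ⟨x, hmA x hx⟩ (by simpa using hx)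
  exact ⟨s, hs, (hA _ _).dist_le_dist_induce.trans hxs⟩

namespace TreeOfSpaces

variable {VK VT : Type*} {K : SimpleGraph VK} {T : SimpleGraph VT} {f : VK → VT}

lemma injOn_map_crossing_edges (h : TreeOfSpaces K T f) :
    Set.InjOn (Sym2.map f) {e | e ∈ K.edgeSet ∧ ¬(e.map f).IsDiag} := by
  rintro ⟨a, c⟩ ⟨hac, hdiag⟩ ⟨a', c'⟩ ⟨ha'c', -⟩ heq
  have huniq := h.2.2.2 _ _ ((h.2.1 a c hac).resolve_left hdiag)
  rcases Sym2.eq_iff.1 heq with ⟨h1, h2⟩ | ⟨h1, h2⟩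
  · have := huniq.unique (y₁ := (a, c)) ⟨rfl, rfl, hac⟩ ⟨h1.symm, h2.symm, ha'c'⟩
    simp_all
  · have := huniq.unique (y₁ := (a, c)) (y₂ := (c', a')) ⟨rfl, rfl, hac⟩
      ⟨h1.symm, h2.symm, ha'c'.symm⟩
    simp_all [Sym2.eq_swap]

lemma exists_mem_fiber_of_isTrail (h : TreeOfSpaces K T f) {S : Set VK}
    (hS : (K.induce S).Preconnected) {a b : VK} (ha : a ∈ S) (hb : b ∈ S) {w : K.Walk a b}
    (hw : w.IsTrail) {z : VK} (hz : z ∈ w.support) : ∃ y ∈ S, f y = f z := by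
  have hpath : (w.project h.2.1).IsPath :=
    (h.1.isAcyclic.isPath_iff_isTrail _).2 (hw.project h.injOn_map_crossing_edges)
  obtain ⟨v⟩ := hS ⟨a, ha⟩ ⟨b, hb⟩
  have hfz := h.1.isAcyclic.support_subset_of_isPath hpath
    ((v.map (Embedding.induce S).toHom).project h.2.1)
    ((w.mem_support_project_iff).2 ⟨z, hz, rfl⟩)
  obtain ⟨y, hy, hyz⟩ := (Walk.mem_support_project_iff _).1 hfz
  simp only [Walk.support_map, List.mem_map] at hy
  obtain ⟨y, -, rfl⟩ := hy
  exact ⟨y, y.2, hyz⟩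

end TreeOfSpaces

/-- Let `K` be a tree of spaces over `T` and let `L` be a connected subgraph (with
vertex set `S`) of `K` whose intersection with each vertex space is `κ`-quasiconvex
there, and which contains every edge of `K` joining two vertex spaces that `L` meets.
Then `L` is `κ'`-quasiconvex in `K`, where `κ'` depends only on `κ`. -/
theorem quasiconvex_tree_of_spaces (κ : ℕ) :
    ∃ κ' : ℕ, ∀ (VK VT : Type) (K : SimpleGraph VK) (T : SimpleGraph VT) (f : VK → VT),
      TreeOfSpaces K T f → K.Connected →
      ∀ S : Set VK, (K.induce S).Connected →
      (∀ t : VT, QuasiconvexIn (K.induce (f ⁻¹' {t}))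
        {x : (f ⁻¹' {t} : Set VK) | (x : VK) ∈ S} κ) →
      (∀ a b : VK, K.Adj a b → f a ≠ f b →
        (∃ a' ∈ S, f a' = f a) → (∃ b' ∈ S, f b' = f b) → a ∈ S ∧ b ∈ S) →
      QuasiconvexIn K S κ' := by
  refine ⟨κ, fun VK VT K T f hTS _ S hS hQ hE a b ha hb w hw x hx => ?_⟩
  have hmeets (z : VK) (hz : z ∈ w.support) : ∃ y ∈ S, f y = f z :=
    hTS.exists_mem_fiber_of_isTrail hS.preconnected ha hb (w.isPath_of_length_eq_dist hw).isTrail hz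
  obtain ⟨p, hp, q, hq, m, hmw, hxm, hm⟩ := w.exists_fiber_segment_mem hE ha hb hmeets hx
  exact (hQ (f x)).exists_dist_le_of_support_subset (hTS.2.2.1 _ ⟨x, rfl⟩).preconnected hp hq m
    (length_eq_dist_of_subwalk hw hmw) hm hxm
end
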